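/- arXiv:2111.01940 — 2 statements merged into one kernel-verified Lean document; each statement's English description precedes it below -/
import Mathlib

section
/- Let W be skew-symmetric, X ∈ ℝ^{n×p} with XᵀX = I_p, and Y(τ) the Cayley curve. Then Y'(τ) = -(I + (τ/2)W)⁻¹ W ((X + Y(τ))/2) for all τ where I + (τ/2)W is invertible. -/
/-!
Since `1 - (τ/2)W = 2 - A(τ)` with `A(τ) = 1 + (τ/2)W`, the Cayley curve is
`Y(τ) = 2 A(τ)⁻¹ X - X` wherever `A(τ)` is invertible. Differentiating the inverse,
`(A⁻¹)' = -A⁻¹ A' A⁻¹ = -½ A⁻¹ W A⁻¹`, gives `Y' = -A⁻¹ W (A⁻¹ X)`, and `A⁻¹ X = (X + Y)/2`.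
-/

open Matrix
attribute [local instance] Matrix.normedAddCommGroup Matrix.normedSpace

open Filter Topology

section

variable {𝕜 : Type*} [NontriviallyNormedField 𝕜] {m n p : Type*}

theorem hasDerivAt_matrix_iff [Fintype m] [Fintype n] {f : 𝕜 → Matrix m n 𝕜}
    {f' : Matrix m n 𝕜} {τ : 𝕜} :
    HasDerivAt f f' τ ↔ ∀ i j, HasDerivAt (fun t => f t i j) (f' i j) τ :=
  hasDerivAt_pi.trans (forall_congr' fun _ => hasDerivAt_pi)

theorem HasDerivAt.matrix_mul_const [Fintype m] [Fintype n] [Fintype p]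
    {f : 𝕜 → Matrix m n 𝕜} {f' : Matrix m n 𝕜} {τ : 𝕜}
    (hf : HasDerivAt f f' τ) (C : Matrix n p 𝕜) :
    HasDerivAt (fun t => f t * C) (f' * C) τ := by
  rw [hasDerivAt_matrix_iff] at hf ⊢
  intro i j
  simp only [Matrix.mul_apply]
  exact HasDerivAt.fun_sum fun k _ => (hf i k).mul_const (C k j)

theorem ContinuousAt.eventually_isUnit_matrix [Fintype n] [DecidableEq n] {α : Type*}
    [TopologicalSpace α] {A : α → Matrix n n 𝕜} {a : α} (hA : ContinuousAt A a)
    (ha : IsUnit (A a)) : ∀ᶠ x in 𝓝 a, IsUnit (A x) := by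
  have hdet : (A a).det ≠ 0 := ((isUnit_iff_isUnit_det _).mp ha).ne_zero
  filter_upwards [(continuous_id.matrix_det.continuousAt.comp hA).eventually_ne hdet] with x hx
  exact (isUnit_iff_isUnit_det _).mpr (isUnit_iff_ne_zero.mpr hx)

theorem Matrix.nonsing_inv_sub_nonsing_inv [Fintype n] [DecidableEq n] {A B : Matrix n n 𝕜}
    (hA : IsUnit A) (hB : IsUnit B) : A⁻¹ - B⁻¹ = A⁻¹ * (B - A) * B⁻¹ := by
  rw [Matrix.mul_sub, Matrix.sub_mul,
    Matrix.mul_nonsing_inv_cancel_right _ _ ((isUnit_iff_isUnit_det B).mp hB),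
    Matrix.nonsing_inv_mul _ ((isUnit_iff_isUnit_det A).mp hA), Matrix.one_mul]

theorem HasDerivAt.matrix_inv [Fintype n] [DecidableEq n] {A : 𝕜 → Matrix n n 𝕜}
    {A' : Matrix n n 𝕜} {τ : 𝕜} (hA : HasDerivAt A A' τ) (hτ : IsUnit (A τ)) :
    HasDerivAt (fun t => (A t)⁻¹) (-((A τ)⁻¹ * A' * (A τ)⁻¹)) τ := by
  have hinv_cont : ContinuousAt (fun t => (A t)⁻¹) τ := by
    refine ContinuousAt.comp (g := Inv.inv) (continuousAt_matrix_inv _ ?_) hA.continuousAt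
    simpa only [Ring.inverse_eq_inv'] using
      continuousAt_inv₀ ((isUnit_iff_isUnit_det _).mp hτ).ne_zero
  -- the resolvent identity turns the slope of `A⁻¹` into `-A(t)⁻¹ (slope of A) A(τ)⁻¹`
  have hslope : slope (fun t => (A t)⁻¹) τ =ᶠ[𝓝[≠] τ]
      fun t => -((A t)⁻¹ * slope A τ t * (A τ)⁻¹) := by
    filter_upwards [nhdsWithin_le_nhds (hA.continuousAt.eventually_isUnit_matrix hτ)] with t ht
    rw [slope_def_module, slope_def_module, Matrix.nonsing_inv_sub_nonsing_inv ht hτ,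
      Matrix.mul_smul, Matrix.smul_mul, ← smul_neg, ← Matrix.neg_mul, ← Matrix.mul_neg, neg_sub]
  refine hasDerivAt_iff_tendsto_slope.mpr (Tendsto.congr' hslope.symm ?_)
  exact (((hinv_cont.tendsto.mono_left nhdsWithin_le_nhds).mul hA.tendsto_slope).mul_const _).neg

theorem Matrix.cayley_eq_two_smul_nonsing_inv_sub_one [Fintype n] [DecidableEq n]
    {W : Matrix n n 𝕜} {s : 𝕜} (h : IsUnit (1 + s • W)) :
    (1 + s • W)⁻¹ * (1 - s • W) = (2 : 𝕜) • (1 + s • W)⁻¹ - 1 := by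
  rw [show 1 - s • W = (2 : 𝕜) • 1 - (1 + s • W) by module, Matrix.mul_sub, Matrix.mul_smul,
    Matrix.mul_one, Matrix.nonsing_inv_mul _ ((isUnit_iff_isUnit_det _).mp h)]

end

theorem cayley_deriv_general {n p : ℕ} (W : Matrix (Fin n) (Fin n) ℝ)
    (X : Matrix (Fin n) (Fin p) ℝ)
    (Y : ℝ → Matrix (Fin n) (Fin p) ℝ)
    (hY : ∀ τ : ℝ, Y τ = (1 + (τ / 2) • W)⁻¹ * (1 - (τ / 2) • W) * X)
    (τ : ℝ) (hinv : IsUnit ((1 : Matrix (Fin n) (Fin n) ℝ) + (τ / 2) • W)) :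
    HasDerivAt Y (-((1 + (τ / 2) • W)⁻¹ * W * ((2 : ℝ)⁻¹ • (X + Y τ)))) τ := by
  set A : ℝ → Matrix (Fin n) (Fin n) ℝ := fun t => 1 + (t / 2) • W
  have hA : HasDerivAt A ((2 : ℝ)⁻¹ • W) τ := by
    have h := (((hasDerivAt_id' τ).div_const 2).smul_const W).const_add (1 : Matrix _ _ ℝ)
    rwa [one_div] at h
  have hY_eq : ∀ t, IsUnit (A t) → Y t = (2 : ℝ) • ((A t)⁻¹ * X) - X := fun t ht => by
    rw [hY, Matrix.cayley_eq_two_smul_nonsing_inv_sub_one ht, Matrix.sub_mul, Matrix.smul_mul,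
      Matrix.one_mul]
  have hY_near : (fun t => (2 : ℝ) • ((A t)⁻¹ * X) - X) =ᶠ[𝓝 τ] Y :=
    (hA.continuousAt.eventually_isUnit_matrix hinv).mono fun t ht => (hY_eq t ht).symm
  have hmid : (2 : ℝ)⁻¹ • (X + Y τ) = (A τ)⁻¹ * X := by
    rw [hY_eq τ hinv]
    module
  refine ((((hA.matrix_inv hinv).matrix_mul_const X).const_smul (2 : ℝ)).sub_const X
    |>.congr_of_eventuallyEq hY_near.symm).congr_deriv ?_
  rw [hmid]
  simp only [Matrix.neg_mul, Matrix.smul_mul, Matrix.mul_smul, Matrix.mul_assoc, smul_neg, smul_smul]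
  norm_num [A]

/-- The derivative of the Cayley curve satisfies
`Y'(τ) = -(I + (τ/2)W)⁻¹ W ((X + Y(τ))/2)` whenever `I + (τ/2)W` is invertible. -/
theorem cayley_deriv {n p : ℕ} (W : Matrix (Fin n) (Fin n) ℝ)
    (hW : Wᵀ = -W) (X : Matrix (Fin n) (Fin p) ℝ) (hX : Xᵀ * X = 1)
    (Y : ℝ → Matrix (Fin n) (Fin p) ℝ)
    (hY : ∀ τ : ℝ, Y τ = (1 + (τ / 2) • W)⁻¹ * (1 - (τ / 2) • W) * X)
    (τ : ℝ) (hinv : IsUnit ((1 : Matrix (Fin n) (Fin n) ℝ) + (τ / 2) • W)) :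
    HasDerivAt Y (-((1 + (τ / 2) • W)⁻¹ * W * ((2 : ℝ)⁻¹ • (X + Y τ)))) τ :=
  cayley_deriv_general W X Y hY τ hinv
end

section
/- Let F : ℝ^{n×p} → ℝ be differentiable with Euclidean gradient G at X ∈ V_p(ℝ^n), set A = GXᵀ - XGᵀ and Y(τ) = (I + (τ/2)A)⁻¹(I - (τ/2)A)X. Then d/dτ F(Y(τ)) at τ = 0 equals -(1/2)‖A‖_F², so Y is a descent curve whenever A ≠ 0. -/
/-!
With `M(τ) = 1 + (τ/2)A` one has `M⁻¹(1 - (τ/2)A) = 1 - τ M⁻¹A`, and `M(τ)⁻¹` is continuous at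
`τ = 0`, so the Cayley curve leaves `X` with velocity `-AX`. By the chain rule the derivative of
`F ∘ Y` at `0` is `-tr(Gᵀ A X)`, and skew-symmetry of `A = GXᵀ - XGᵀ` gives
`‖A‖_F² = -tr(A²) = 2 tr(Gᵀ A X)`.
-/

open Matrix Filter Topology
attribute [local instance] Matrix.normedAddCommGroup Matrix.normedSpace

theorem ContinuousAt.hasDerivAt_smul {𝕜 E : Type*} [NontriviallyNormedField 𝕜]
    [NormedAddCommGroup E] [NormedSpace 𝕜 E] {k : 𝕜 → E} (hk : ContinuousAt k 0) :
    HasDerivAt (fun t => t • k t) (k 0) 0 := by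
  refine hasDerivAt_iff_tendsto_slope.2 <| (hk.tendsto.mono_left nhdsWithin_le_nhds).congr' ?_
  filter_upwards [self_mem_nhdsWithin] with t (ht : t ≠ 0)
  simp [slope_def_module, smul_smul, ht]

namespace Matrix

variable {m n : Type*} [Fintype m] [Fintype n]

theorem two_mul_trace_transpose_mul_skew_mul {R : Type*} [CommRing R] (G X : Matrix n m R) :
    2 * trace (Gᵀ * ((G * Xᵀ - X * Gᵀ) * X)) = ∑ i, ∑ j, (G * Xᵀ - X * Gᵀ) i j ^ 2 := by
  set A := G * Xᵀ - X * Gᵀ with hA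
  have hskew : Aᵀ = -A := by simp [hA, transpose_sub, transpose_mul]
  have hXG : trace (A * (X * Gᵀ)) = trace (Gᵀ * (A * X)) := by
    rw [← Matrix.mul_assoc, trace_mul_comm]
  have hGX : trace (A * (G * Xᵀ)) = -trace (Gᵀ * (A * X)) := by
    rw [← trace_transpose, transpose_mul, transpose_mul, transpose_transpose, hskew,
      Matrix.mul_neg, trace_neg, Matrix.mul_assoc, trace_mul_comm, Matrix.mul_assoc]
  calc 2 * trace (Gᵀ * (A * X))
      = -trace (A * A) := by rw [hA, Matrix.mul_sub, trace_sub, ← hA, hXG, hGX]; ring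
    _ = trace (A * Aᵀ) := by rw [hskew, Matrix.mul_neg, trace_neg]
    _ = ∑ i, ∑ j, A i j ^ 2 := by simp only [trace, diag, mul_apply, transpose_apply, sq]

variable [DecidableEq n]

theorem inv_one_add_smul_mul_one_sub_smul {R : Type*} [CommRing R] (A : Matrix n n R) (s : R)
    (h : IsUnit (1 + s • A).det) :
    (1 + s • A)⁻¹ * (1 - s • A) = 1 - (2 * s) • ((1 + s • A)⁻¹ * A) := by
  rw [show 1 - s • A = (1 + s • A) - (2 * s) • A by module, Matrix.mul_sub,
    nonsing_inv_mul _ h, Matrix.mul_smul]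

theorem eventually_isUnit_det_one_add_smul {𝕜 : Type*} [NormedField 𝕜] (A : Matrix n n 𝕜) :
    ∀ᶠ s in 𝓝 (0 : 𝕜), IsUnit (1 + s • A).det := by
  have hcont : ContinuousAt (fun s : 𝕜 => (1 + s • A).det) 0 := by fun_prop
  filter_upwards [hcont.eventually_ne (by simp : (1 + (0 : 𝕜) • A).det ≠ 0)] with s hs
  exact isUnit_iff_ne_zero.2 hs

theorem continuousAt_inv_one_add_smul {𝕜 : Type*} [NormedField 𝕜] (A : Matrix n n 𝕜) :
    ContinuousAt (fun s : 𝕜 => (1 + s • A)⁻¹) 0 := by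
  have hinv : ContinuousAt Inv.inv (1 + (0 : 𝕜) • A) := by
    refine continuousAt_matrix_inv _ ?_
    rw [Ring.inverse_eq_inv']
    exact continuousAt_inv₀ (by simp)
  exact hinv.comp (f := fun s : 𝕜 => 1 + s • A) (x := 0) (by fun_prop)

theorem hasDerivAt_cayley_mul {𝕜 : Type*} [RCLike 𝕜] (A : Matrix n n 𝕜) (X : Matrix n m 𝕜) :
    HasDerivAt (fun τ : 𝕜 => (1 + (τ / 2) • A)⁻¹ * (1 - (τ / 2) • A) * X) (-(A * X)) 0 := by
  have hhalf : Tendsto (fun τ : 𝕜 => τ / 2) (𝓝 0) (𝓝 0) :=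
    (continuous_id.div_const 2).tendsto' 0 0 (zero_div 2)
  have hk : ContinuousAt (fun τ : 𝕜 => (1 + (τ / 2) • A)⁻¹ * (A * X)) 0 :=
    (continuous_id.matrix_mul continuous_const).continuousAt.comp
      ((continuousAt_inv_one_add_smul A).comp_of_eq (by fun_prop) (zero_div 2))
  have hderiv := (hk.hasDerivAt_smul).const_sub X
  simp only [zero_div, zero_smul, add_zero, inv_one, Matrix.one_mul] at hderiv
  refine hderiv.congr_of_eventuallyEq ?_
  filter_upwards [hhalf.eventually (eventually_isUnit_det_one_add_smul A)] with τ hτ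
  rw [inv_one_add_smul_mul_one_sub_smul A _ hτ, mul_div_cancel₀ τ two_ne_zero, Matrix.sub_mul,
    Matrix.one_mul, Matrix.smul_mul, Matrix.mul_assoc]

end Matrix

theorem cayley_descent_curve_general {n p : ℕ}
    (F : Matrix (Fin n) (Fin p) ℝ → ℝ)
    (G X : Matrix (Fin n) (Fin p) ℝ)
    (L : Matrix (Fin n) (Fin p) ℝ →L[ℝ] ℝ)
    (hF : HasFDerivAt F L X)
    (hL : ∀ Z : Matrix (Fin n) (Fin p) ℝ, L Z = Matrix.trace (Gᵀ * Z))
    (A : Matrix (Fin n) (Fin n) ℝ) (hA : A = G * Xᵀ - X * Gᵀ) :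
    HasDerivAt (fun τ : ℝ => F ((1 + (τ / 2) • A)⁻¹ * (1 - (τ / 2) • A) * X))
      (-(1 / 2) * ∑ i, ∑ j, (A i j) ^ 2) 0 := by
  have hY₀ : (1 + ((0 : ℝ) / 2) • A)⁻¹ * (1 - ((0 : ℝ) / 2) • A) * X = X := by simp
  have hcomp := (hY₀ ▸ hF).comp_hasDerivAt (0 : ℝ) (hasDerivAt_cayley_mul A X)
  refine hcomp.congr_deriv ((hL _).trans ?_)
  rw [Matrix.mul_neg, trace_neg, hA, ← two_mul_trace_transpose_mul_skew_mul]
  ring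

/-- Descent property of the Cayley curve: if `F` has Euclidean gradient `G` at
`X` (meaning the derivative of `F` at `X` in direction `Z` is `trace(GᵀZ)`),
`A = GXᵀ - XGᵀ`, and `Y(τ) = (I + (τ/2)A)⁻¹ (I - (τ/2)A) X`, then
`d/dτ F(Y(τ))|_{τ=0} = -(1/2)‖A‖_F²`. -/
theorem cayley_descent_curve {n p : ℕ}
    (F : Matrix (Fin n) (Fin p) ℝ → ℝ)
    (G X : Matrix (Fin n) (Fin p) ℝ) (hX : Xᵀ * X = 1)
    (L : Matrix (Fin n) (Fin p) ℝ →L[ℝ] ℝ)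
    (hF : HasFDerivAt F L X)
    (hL : ∀ Z : Matrix (Fin n) (Fin p) ℝ, L Z = Matrix.trace (Gᵀ * Z))
    (A : Matrix (Fin n) (Fin n) ℝ) (hA : A = G * Xᵀ - X * Gᵀ) :
    HasDerivAt (fun τ : ℝ => F ((1 + (τ / 2) • A)⁻¹ * (1 - (τ / 2) • A) * X))
      (-(1 / 2) * ∑ i, ∑ j, (A i j) ^ 2) 0 :=
  cayley_descent_curve_general F G X L hF hL A hA
end
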